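/- arXiv:1910.04445 — 2 statements merged into one kernel-verified Lean document; each statement's English description precedes it below -/
import Mathlib

section
/- Let α > 1 and μ > −1 and let f be a normalized analytic function on 𝔻 (f(0)=0, f'(0)=1). Suppose |(Ω^{α−1,μ} f(z) − Ω^{α,μ} f(z))/z| < 1/(1+α(μ+1)) for all z ∈ 𝔻 \ {0} (with the quotient extended analytically at 0). Then Re(Ω^{α,μ} f(z)/z) > 0 for all z ∈ 𝔻. -/
open Complex Metric

/-!
Put `P z = Ω^{α,μ} f z / z`, so that `P 0 = 1`. The Gamma recurrence behind
`z (Ω^{α,μ} f)' = (1 + α(μ+1)) Ω^{α-1,μ} f - α(μ+1) Ω^{α,μ} f` turns the hypothesis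
into `|z P'(z)| < 1` on the disc. Schwarz's lemma applied to `z P'(z)`, which vanishes at `0`,
gives `|P'| ≤ 1`, hence `|P z - 1| ≤ |z| < 1` and `Re P z > 0`. The coefficients of
`Ω^{α,μ}` are bounded by log-convexity of `Γ`, so all the series involved converge on the disc.
-/

theorem Real.Gamma_mul_Gamma_le_Gamma_add_sub_one {x y : ℝ} (hx : 1 ≤ x) (hy : 1 ≤ y) :
    Real.Gamma x * Real.Gamma y ≤ Real.Gamma (x + y - 1) := by
  rcases hx.eq_or_lt with rfl | hx
  · simp
  rcases hy.eq_or_lt with rfl | hy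
  · simp
  set t := x + y - 1
  have ht : 0 < t - 1 := by linarith
  have hΓt : 0 < Real.Gamma t := Real.Gamma_pos_of_pos (by linarith)
  -- `u` is a convex combination of `1` and `t`, and `Γ` is log-convex with `Γ 1 = 1`
  have interp : ∀ u, 1 < u → u < t → Real.Gamma u ≤ Real.Gamma t ^ ((u - 1) / (t - 1)) := by
    intro u hu hut
    have h := Real.Gamma_mul_add_mul_le_rpow_Gamma_mul_rpow_Gamma one_pos (by linarith : 0 < t)
      (div_pos (by linarith : 0 < t - u) ht) (div_pos (by linarith : 0 < u - 1) ht)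
      (by field_simp; ring)
    rwa [show (t - u) / (t - 1) * 1 + (u - 1) / (t - 1) * t = u by field_simp; ring,
      Real.Gamma_one, Real.one_rpow, one_mul] at h
  calc Real.Gamma x * Real.Gamma y
      ≤ Real.Gamma t ^ ((x - 1) / (t - 1)) * Real.Gamma t ^ ((y - 1) / (t - 1)) :=
        mul_le_mul (interp x hx (by linarith)) (interp y hy (by linarith))
          (Real.Gamma_pos_of_pos (by linarith)).le (by positivity)
    _ = Real.Gamma t := by
        rw [← Real.rpow_add hΓt, ← add_div, show x - 1 + (y - 1) = t - 1 by ring,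
          div_self ht.ne', Real.rpow_one]

noncomputable def omegaCoeff (μ β : ℝ) (n : ℕ) : ℝ :=
  Real.Gamma (1 / (μ + 1) + β + 1) * Real.Gamma ((n : ℝ) / (μ + 1) + 1) /
    (Real.Gamma ((n : ℝ) / (μ + 1) + β + 1) * Real.Gamma (1 / (μ + 1) + 1))

section omegaCoeff

variable {μ β : ℝ}

theorem omegaCoeff_nonneg (hμ : -1 < μ) (hβ : -1 < β) (n : ℕ) : 0 ≤ omegaCoeff μ β n := by
  have : 0 ≤ (n : ℝ) / (μ + 1) := div_nonneg n.cast_nonneg (by linarith)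
  have : 0 < 1 / (μ + 1) := one_div_pos.2 (by linarith)
  have hΓ : ∀ x : ℝ, 0 ≤ x → 0 ≤ Real.Gamma x := fun _ => Real.Gamma_nonneg_of_nonneg
  exact div_nonneg (mul_nonneg (hΓ _ (by linarith)) (hΓ _ (by linarith)))
    (mul_nonneg (hΓ _ (by linarith)) (hΓ _ (by linarith)))

theorem omegaCoeff_one (hμ : -1 < μ) (hβ : -1 < β) : omegaCoeff μ β 1 = 1 := by
  have : 0 < 1 / (μ + 1) := one_div_pos.2 (by linarith)
  rw [omegaCoeff, Nat.cast_one, mul_comm (Real.Gamma _)]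
  exact div_self
    (mul_pos (Real.Gamma_pos_of_pos (by linarith)) (Real.Gamma_pos_of_pos (by linarith))).ne'

theorem omegaCoeff_le_omegaCoeff_zero (hμ : -1 < μ) (hβ : 0 ≤ β) (n : ℕ) :
    omegaCoeff μ β n ≤ omegaCoeff μ β 0 := by
  have hn : 0 ≤ (n : ℝ) / (μ + 1) := div_nonneg n.cast_nonneg (by linarith)
  have : 0 < 1 / (μ + 1) := one_div_pos.2 (by linarith)
  have h := Real.Gamma_mul_Gamma_le_Gamma_add_sub_one (x := n / (μ + 1) + 1) (y := β + 1)
    (by linarith) (by linarith)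
  rw [show (n : ℝ) / (μ + 1) + 1 + (β + 1) - 1 = n / (μ + 1) + β + 1 by ring] at h
  have hΓ : ∀ x : ℝ, 0 < x → 0 < Real.Gamma x := fun x hx => Real.Gamma_pos_of_pos hx
  calc omegaCoeff μ β n
      = Real.Gamma (1 / (μ + 1) + β + 1) / Real.Gamma (1 / (μ + 1) + 1) *
          (Real.Gamma (n / (μ + 1) + 1) / Real.Gamma (n / (μ + 1) + β + 1)) := by
        rw [omegaCoeff]; ring
    _ ≤ Real.Gamma (1 / (μ + 1) + β + 1) / Real.Gamma (1 / (μ + 1) + 1) *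
          (1 / Real.Gamma (β + 1)) := by
        refine mul_le_mul_of_nonneg_left ?_
          (div_nonneg (hΓ _ (by linarith)).le (hΓ _ (by linarith)).le)
        rw [div_le_div_iff₀ (hΓ _ (by linarith)) (hΓ _ (by linarith))]
        linarith
    _ = omegaCoeff μ β 0 := by
        rw [omegaCoeff, Nat.cast_zero, zero_div, zero_add, zero_add, Real.Gamma_one]; ring

theorem omegaCoeff_sub_one (hμ : -1 < μ) (hβ : 0 < β) (n : ℕ) :
    omegaCoeff μ (β - 1) n = (n + β * (μ + 1)) / (1 + β * (μ + 1)) * omegaCoeff μ β n := by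
  have hμ' : 0 < μ + 1 := by linarith
  have hn : 0 ≤ (n : ℝ) / (μ + 1) := div_nonneg n.cast_nonneg hμ'.le
  have h1 : 0 < 1 / (μ + 1) + β := by positivity
  have h2 : 0 < n / (μ + 1) + β := by positivity
  have hΓ1 := (Real.Gamma_pos_of_pos h1).ne'
  have hΓ2 := (Real.Gamma_pos_of_pos h2).ne'
  rw [omegaCoeff, omegaCoeff, add_sub_assoc', sub_add_cancel, add_sub_assoc', sub_add_cancel,
    Real.Gamma_add_one h1.ne', Real.Gamma_add_one h2.ne']
  field_simp

end omegaCoeff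

section PowerSeries

variable {g : ℕ → ℂ}

theorem summable_norm_mul_pow_of_lt_one
    (hg : ∀ z ∈ ball (0 : ℂ) 1, Summable fun n => g n * z ^ n) {r : ℝ} (hr0 : 0 ≤ r)
    (hr : r < 1) :
    Summable fun n => ‖g n‖ * r ^ n := by
  have h := summable_norm_iff.2 (hg r (by simpa [abs_of_nonneg hr0] using hr))
  simpa [norm_mul, norm_pow, abs_of_nonneg hr0] using h

theorem norm_mul_pow_le_of_mem_ball (n : ℕ) {r : ℝ} {z : ℂ} (hz : z ∈ ball (0 : ℂ) r) :
    ‖g n * z ^ n‖ ≤ ‖g n‖ * r ^ n := by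
  rw [norm_mul, norm_pow]
  gcongr
  exact (mem_ball_zero_iff.1 hz).le

theorem differentiableOn_tsum_mul_pow
    (hg : ∀ z ∈ ball (0 : ℂ) 1, Summable fun n => g n * z ^ n) :
    DifferentiableOn ℂ (fun z => ∑' n, g n * z ^ n) (ball 0 1) := by
  intro w hw
  obtain ⟨r, hwr, hr⟩ := exists_between (mem_ball_zero_iff.1 hw)
  have hu := summable_norm_mul_pow_of_lt_one hg ((norm_nonneg w).trans hwr.le) hr
  refine (differentiableOn_tsum_of_summable_norm hu (fun n => ?_) isOpen_ball
    (fun n _ => norm_mul_pow_le_of_mem_ball n)).differentiableAt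
      (isOpen_ball.mem_nhds (mem_ball_zero_iff.2 hwr)) |>.differentiableWithinAt
  exact ((differentiable_pow n).const_mul (g n)).differentiableOn

theorem hasSum_deriv_tsum_mul_pow (hg : ∀ z ∈ ball (0 : ℂ) 1, Summable fun n => g n * z ^ n)
    {w : ℂ} (hw : w ∈ ball (0 : ℂ) 1) :
    HasSum (fun n => g n * (n * w ^ (n - 1))) (deriv (fun z => ∑' n, g n * z ^ n) w) := by
  obtain ⟨r, hwr, hr⟩ := exists_between (mem_ball_zero_iff.1 hw)
  have hu := summable_norm_mul_pow_of_lt_one hg ((norm_nonneg w).trans hwr.le) hr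
  have h := hasSum_deriv_of_summable_norm hu
    (fun n => ((differentiable_pow n).const_mul (g n)).differentiableOn) isOpen_ball
    (fun n _ => norm_mul_pow_le_of_mem_ball n) (mem_ball_zero_iff.2 hwr)
  simpa only [deriv_const_mul_field', deriv_pow_field] using h

theorem hasSum_mul_deriv_tsum_mul_pow
    (hg : ∀ z ∈ ball (0 : ℂ) 1, Summable fun n => g n * z ^ n) {w : ℂ}
    (hw : w ∈ ball (0 : ℂ) 1) :
    HasSum (fun n => n * g n * w ^ n) (w * deriv (fun z => ∑' n, g n * z ^ n) w) := by
  refine ((hasSum_deriv_tsum_mul_pow hg hw).mul_left w).congr_fun fun n => ?_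
  rcases n with _ | n
  · simp
  · rw [Nat.add_sub_cancel, pow_succ]
    ring

end PowerSeries

/-- `omega μ β a` is `Ω^{β,μ} f` for `f z = ∑ a n * z ^ n`. -/
noncomputable def omega (μ β : ℝ) (a : ℕ → ℂ) (z : ℂ) : ℂ :=
  ∑' n, (omegaCoeff μ β n : ℂ) * a n * z ^ n

section omega

variable {μ β : ℝ} {a : ℕ → ℂ}

theorem summable_omegaCoeff_mul_pow (hμ : -1 < μ) (hβ : 0 ≤ β)
    (ha : ∀ z ∈ ball (0 : ℂ) 1, Summable fun n => a n * z ^ n) {z : ℂ}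
    (hz : z ∈ ball (0 : ℂ) 1) :
    Summable fun n => (omegaCoeff μ β n : ℂ) * a n * z ^ n := by
  refine Summable.of_norm_bounded ((summable_norm_iff.2 (ha z hz)).mul_left (omegaCoeff μ β 0))
    fun n => ?_
  rw [mul_assoc, norm_mul, norm_real, Real.norm_of_nonneg (omegaCoeff_nonneg hμ (by linarith) n)]
  exact mul_le_mul_of_nonneg_right (omegaCoeff_le_omegaCoeff_zero hμ hβ n) (norm_nonneg _)

theorem differentiableOn_omega (hμ : -1 < μ) (hβ : 0 ≤ β)
    (ha : ∀ z ∈ ball (0 : ℂ) 1, Summable fun n => a n * z ^ n) :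
    DifferentiableOn ℂ (omega μ β a) (ball 0 1) :=
  differentiableOn_tsum_mul_pow fun _ hz => summable_omegaCoeff_mul_pow hμ hβ ha hz

theorem omega_zero (ha0 : a 0 = 0) : omega μ β a 0 = 0 := by
  rw [omega, tsum_eq_single 0 fun n hn => by simp [hn]]
  simp [ha0]

theorem deriv_omega_zero (hμ : -1 < μ) (hβ : 0 ≤ β)
    (ha : ∀ z ∈ ball (0 : ℂ) 1, Summable fun n => a n * z ^ n) :
    deriv (omega μ β a) 0 = omegaCoeff μ β 1 * a 1 := by
  refine (hasSum_deriv_tsum_mul_pow (fun _ hz => summable_omegaCoeff_mul_pow hμ hβ ha hz)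
    (mem_ball_self one_pos)).unique ?_
  convert hasSum_single 1 fun n hn => ?_ using 1
  · simp
  · rcases n with _ | _ | n <;> simp_all

theorem mul_deriv_omega (hμ : -1 < μ) (hβ : 0 < β)
    (ha : ∀ z ∈ ball (0 : ℂ) 1, Summable fun n => a n * z ^ n) {z : ℂ}
    (hz : z ∈ ball (0 : ℂ) 1) :
    z * deriv (omega μ β a) z =
      (1 + β * (μ + 1)) * omega μ (β - 1) a z - β * (μ + 1) * omega μ β a z := by
  have hg : ∀ w ∈ ball (0 : ℂ) 1,
      Summable fun n => (omegaCoeff μ β n : ℂ) * a n * w ^ n :=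
    fun _ hw => summable_omegaCoeff_mul_pow hμ hβ.le ha hw
  have hK : (1 + β * (μ + 1) : ℂ) ≠ 0 := by
    exact_mod_cast (by nlinarith : (0 : ℝ) < 1 + β * (μ + 1)).ne'
  have h := ((hasSum_mul_deriv_tsum_mul_pow hg hz).add
    ((hg z hz).hasSum.mul_left ((β : ℂ) * (μ + 1)))).div_const (1 + (β : ℂ) * (μ + 1))
  have hrec : omega μ (β - 1) a z =
      (z * deriv (omega μ β a) z + β * (μ + 1) * omega μ β a z) / (1 + β * (μ + 1)) :=
    (h.congr_fun fun n => by rw [omegaCoeff_sub_one hμ hβ]; push_cast; field_simp).tsum_eq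
  rw [hrec]
  field_simp
  ring

theorem mul_deriv_omega_sub_omega (hμ : -1 < μ) (hβ : 0 < β)
    (ha : ∀ z ∈ ball (0 : ℂ) 1, Summable fun n => a n * z ^ n) {z : ℂ}
    (hz : z ∈ ball (0 : ℂ) 1) :
    z * deriv (omega μ β a) z - omega μ β a z =
      ((1 + β * (μ + 1) : ℝ) : ℂ) * (omega μ (β - 1) a z - omega μ β a z) := by
  rw [mul_deriv_omega hμ hβ ha hz]
  push_cast
  ring

end omega

theorem Complex.norm_sub_le_of_norm_mul_deriv_le_one {P : ℂ → ℂ}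
    (hP : DifferentiableOn ℂ P (ball 0 1))
    (h : ∀ w ∈ ball (0 : ℂ) 1, ‖w * deriv P w‖ ≤ 1) {z : ℂ}
    (hz : z ∈ ball (0 : ℂ) 1) :
    ‖P z - P 0‖ ≤ ‖z‖ := by
  set H : ℂ → ℂ := fun w => w * deriv P w
  have hP' : DifferentiableOn ℂ (deriv P) (ball 0 1) := hP.deriv isOpen_ball
  have hH : DifferentiableOn ℂ H (ball 0 1) := differentiableOn_id.mul hP'
  -- Schwarz's lemma applied to `H`, which vanishes at `0`, bounds `dslope H 0 = deriv P`
  have hdslope : ∀ w ∈ ball (0 : ℂ) 1, dslope H 0 w = deriv P w := by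
    intro w hw
    rcases eq_or_ne w 0 with rfl | hw0
    · have hd := (hasDerivAt_id' (0 : ℂ)).fun_mul
        (hP'.differentiableAt (isOpen_ball.mem_nhds hw)).hasDerivAt
      simpa [H] using hd.deriv
    · rw [dslope_of_ne _ hw0, slope_def_field]
      simp [H, hw0]
  have hbound : ∀ w ∈ ball (0 : ℂ) 1, ‖deriv P w‖ ≤ 1 := fun w hw => by
    simpa [hdslope w hw] using norm_dslope_le_div_of_mapsTo_ball hH
      (fun v hv => by simpa [H] using h v hv) hw
  simpa using Convex.norm_image_sub_le_of_norm_deriv_le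
    (fun w hw => hP.differentiableAt (isOpen_ball.mem_nhds hw)) hbound (convex_ball 0 1)
    (mem_ball_self one_pos) hz

theorem Complex.norm_div_sub_deriv_le {Q : ℂ → ℂ} (hQ : DifferentiableOn ℂ Q (ball 0 1))
    (hQ0 : Q 0 = 0)
    (h : ∀ w ∈ ball (0 : ℂ) 1, w ≠ 0 → ‖(w * deriv Q w - Q w) / w‖ ≤ 1)
    {z : ℂ} (hz : z ∈ ball (0 : ℂ) 1) (hz0 : z ≠ 0) :
    ‖Q z / z - deriv Q 0‖ ≤ ‖z‖ := by
  have hslope : ∀ w ≠ 0, dslope Q 0 w = Q w / w := fun w hw => by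
    rw [dslope_of_ne _ hw, slope_def_field, hQ0, sub_zero, sub_zero]
  have hderiv : ∀ w ∈ ball (0 : ℂ) 1, w ≠ 0 →
      w * deriv (dslope Q 0) w = (w * deriv Q w - Q w) / w := by
    intro w hw hw0
    have hQw := (hQ.differentiableAt (isOpen_ball.mem_nhds hw)).hasDerivAt
    have hd := hQw.fun_div (hasDerivAt_id' w) hw0
    rw [Filter.EventuallyEq.deriv_eq (Filter.eventually_of_mem (isOpen_ne.mem_nhds hw0) hslope),
      hd.deriv]
    field_simp
  have hP := (differentiableOn_dslope (isOpen_ball.mem_nhds (mem_ball_self one_pos))).2 hQ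
  have := norm_sub_le_of_norm_mul_deriv_le_one hP (fun w hw => ?_) hz
  · rwa [hslope z hz0, dslope_same] at this
  rcases eq_or_ne w 0 with rfl | hw0
  · simp
  · rw [hderiv w hw hw0]
    exact h w hw hw0

theorem omega_quotient_positive_re (α μ : ℝ) (hα : 1 < α) (hμ : -1 < μ)
    (a : ℕ → ℂ) (ha0 : a 0 = 0) (ha1 : a 1 = 1)
    (hconv : ∀ z ∈ ball (0 : ℂ) 1, Summable (fun n : ℕ => a n * z ^ n))
    (c : ℝ → ℕ → ℝ)
    (hc : ∀ (β : ℝ) (n : ℕ), c β n =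
      (Real.Gamma (1 / (μ + 1) + β + 1) * Real.Gamma ((n : ℝ) / (μ + 1) + 1)) /
        (Real.Gamma ((n : ℝ) / (μ + 1) + β + 1) * Real.Gamma (1 / (μ + 1) + 1)))
    (Om : ℝ → ℂ → ℂ)
    (hOm : ∀ (β : ℝ) (z : ℂ), Om β z = ∑' n : ℕ, (c β n : ℂ) * a n * z ^ n)
    (hineq : ∀ z ∈ ball (0 : ℂ) 1, z ≠ 0 →
      ‖(Om (α - 1) z - Om α z) / z‖ < 1 / (1 + α * (μ + 1))) :
    ∀ z ∈ ball (0 : ℂ) 1, z ≠ 0 → 0 < (Om α z / z).re := by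
  obtain rfl : c = omegaCoeff μ := funext fun β => funext (hc β)
  obtain rfl : Om = fun β => omega μ β a := funext fun β => funext (hOm β)
  intro z hz hz0
  have hK : 0 < 1 + α * (μ + 1) := by nlinarith
  have hquot : ∀ w ∈ ball (0 : ℂ) 1, w ≠ 0 →
      ‖(w * deriv (omega μ α a) w - omega μ α a w) / w‖ ≤ 1 := by
    intro w hw hw0
    rw [mul_deriv_omega_sub_omega hμ (by linarith) hconv hw, mul_div_assoc, norm_mul, norm_real,
      Real.norm_of_nonneg hK.le]
    exact ((lt_div_iff₀' hK).1 (hineq w hw hw0)).le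
  have hnear := norm_div_sub_deriv_le (differentiableOn_omega hμ (by linarith) hconv)
    (omega_zero ha0) hquot hz hz0
  rw [deriv_omega_zero hμ (by linarith) hconv, omegaCoeff_one hμ (by linarith), ha1, ofReal_one,
    one_mul] at hnear
  have hre := abs_le.1 ((abs_re_le_norm _).trans hnear)
  rw [sub_re, one_re] at hre
  linarith [mem_ball_zero_iff.1 hz]
end

section
/- Let p and g' be analytic on 𝔻 with p(0) = 1, Re(p(z)) > 0, g(0) = 0, g'(0) = 1, and Re(g'(z)) > 1/2 for all z ∈ 𝔻. Write p(z) = ∑_{n≥0} p_n z^n and g(z) = z + ∑_{n≥2} b_n z^n. Then the function u(z) = z + ∑_{n≥2} p_{n−1} b_n z^n satisfies Re(u'(z)) > 0 for all z ∈ 𝔻. -/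
/-!
Fix `‖z‖ < s < 1`, put `ζ = s e^{iθ}` and `W(θ) = 2 Re g'(ζ) - 1 > 0`. Because `g'(0) = 1`, the
Fourier coefficients of `W` are `∫ W(θ) e^{-ikθ} dθ = 2π q_k s^k` for `k ≥ 0`, where `q_k` are the
Taylor coefficients of `g'`. Expanding `p(z/ζ) = Σ p_k (z/s)^k e^{-ikθ}` and integrating termwise,
`2π u'(z) = 2π Σ p_k q_k z^k = ∫₀^{2π} p(z/ζ) W(θ) dθ`, whose real part is the integral of the
positive function `Re p(z/ζ) · W(θ)`.
-/

open Complex Metric FormalMultilinearSeries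
open scoped ENNReal Real ComplexConjugate

theorem HasFPowerSeriesOnBall.hasSum_deriv {𝕜 F : Type*} [NontriviallyNormedField 𝕜]
    [NormedAddCommGroup F] [NormedSpace 𝕜 F] [CompleteSpace F]
    {p : FormalMultilinearSeries 𝕜 𝕜 F} {f : 𝕜 → F} {r : ℝ≥0∞}
    (hf : HasFPowerSeriesOnBall f p 0 r) {z : 𝕜} (hz : ‖z‖ₑ < r) :
    HasSum (fun n => z ^ n • (n + 1) • p.coeff (n + 1)) (deriv f z) := by
  have := (hf.fderiv.hasSum (y := z) (by simpa using hz)).mapL (ContinuousLinearMap.apply 𝕜 F 1)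
  simpa [apply_eq_pow_smul_coeff] using this

section PowerSeries

variable {c : ℕ → ℂ} {f : ℂ → ℂ}

theorem one_le_radius_ofScalars (hc : ∀ z ∈ ball (0 : ℂ) 1, Summable fun n => c n * z ^ n) :
    1 ≤ (ofScalars ℂ c).radius := by
  refine ENNReal.le_of_forall_nnreal_lt fun r hr =>
    (ofScalars ℂ c).le_radius_of_tendsto (l := 0) ?_
  have hz : (r : ℂ) ∈ ball (0 : ℂ) 1 := by simpa using hr
  simpa using (hc _ hz).tendsto_atTop_zero.norm

theorem summable_norm_mul_pow_of_forall_summable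
    (hc : ∀ z ∈ ball (0 : ℂ) 1, Summable fun n => c n * z ^ n) {r : ℝ} (hr0 : 0 ≤ r)
    (hr1 : r < 1) :
    Summable fun n => ‖c n‖ * r ^ n := by
  lift r to NNReal using hr0
  have hr : (r : ℝ≥0∞) < (ofScalars ℂ c).radius :=
    lt_of_lt_of_le (by exact_mod_cast hr1) (one_le_radius_ofScalars hc)
  simpa using (ofScalars ℂ c).summable_norm_mul_pow hr

theorem hasFPowerSeriesOnBall_ofScalars
    (hf : ∀ z ∈ ball (0 : ℂ) 1, HasSum (fun n => c n * z ^ n) (f z)) :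
    HasFPowerSeriesOnBall f (ofScalars ℂ c) 0 1 where
  r_le := one_le_radius_ofScalars fun z hz => (hf z hz).summable
  r_pos := one_pos
  hasSum {y} hy := by
    simpa [ofScalars_apply_eq, mul_comm] using
      hf y (by simpa [← ENNReal.coe_one, Metric.eball_coe] using hy)

theorem continuousOn_of_forall_hasSum
    (hf : ∀ z ∈ ball (0 : ℂ) 1, HasSum (fun n => c n * z ^ n) (f z)) :
    ContinuousOn f (ball 0 1) := by
  simpa [← ENNReal.coe_one, Metric.eball_coe] using
    (hasFPowerSeriesOnBall_ofScalars hf).continuousOn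

theorem hasSum_deriv_of_forall_hasSum
    (hf : ∀ z ∈ ball (0 : ℂ) 1, HasSum (fun n => c n * z ^ n) (f z)) {z : ℂ}
    (hz : z ∈ ball (0 : ℂ) 1) :
    HasSum (fun n => (n + 1) * c (n + 1) * z ^ n) (deriv f z) := by
  have hz : ‖z‖ₑ < 1 := by
    simpa [enorm_eq_nnnorm, ← NNReal.coe_lt_one] using mem_ball_zero_iff.mp hz
  simpa [coeff_ofScalars, mul_comm, mul_left_comm] using
    (hasFPowerSeriesOnBall_ofScalars hf).hasSum_deriv hz

theorem summable_mul_mul_pow {a b : ℕ → ℂ}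
    (ha : ∀ z ∈ ball (0 : ℂ) 1, Summable fun n => a n * z ^ n)
    (hb : ∀ z ∈ ball (0 : ℂ) 1, Summable fun n => b n * z ^ n) {z : ℂ}
    (hz : z ∈ ball (0 : ℂ) 1) :
    Summable fun n => a n * b n * z ^ n := by
  set r := √‖z‖
  have hzr : ‖z‖ = r ^ 2 := (Real.sq_sqrt (norm_nonneg z)).symm
  have hr1 : r < 1 := by rw [Real.sqrt_lt' one_pos, one_pow]; exact mem_ball_zero_iff.mp hz
  have hA := summable_norm_mul_pow_of_forall_summable ha (Real.sqrt_nonneg _) hr1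
  have hB := summable_norm_mul_pow_of_forall_summable hb (Real.sqrt_nonneg _) hr1
  refine Summable.of_norm_bounded (hB.mul_left (∑' n, ‖a n‖ * r ^ n)) fun n => ?_
  calc ‖a n * b n * z ^ n‖ = (‖a n‖ * r ^ n) * (‖b n‖ * r ^ n) := by
        rw [norm_mul, norm_mul, norm_pow, hzr, ← pow_mul]
        ring
    _ ≤ _ := by gcongr; exact hA.le_tsum n fun _ _ => by positivity

theorem hasSum_deriv_of_eq_add_tsum {a b : ℕ → ℂ} {u : ℂ → ℂ}
    (ha : ∀ z ∈ ball (0 : ℂ) 1, Summable fun n => a n * z ^ n)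
    (hb : ∀ z ∈ ball (0 : ℂ) 1, Summable fun n => b n * z ^ n)
    (ha0 : a 0 = 1) (hb0 : b 0 = 0) (hb1 : b 1 = 1)
    (hu : ∀ z, u z = z + ∑' n, a (n + 1) * b (n + 2) * z ^ (n + 2)) {z : ℂ}
    (hz : z ∈ ball (0 : ℂ) 1) :
    HasSum (fun n => a n * ((n + 1) * b (n + 1)) * z ^ n) (deriv u z) := by
  -- `u` has coefficients `a (n - 1) * b n`; the junk value `a (0 - 1) = a 0` is killed by `b 0 = 0`
  have ha' : ∀ z ∈ ball (0 : ℂ) 1, Summable fun n => a (n - 1) * z ^ n := fun z hz =>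
    (summable_nat_add_iff 1).mp <| by
      simpa [pow_succ, mul_comm, mul_left_comm] using (ha z hz).mul_left z
  have hu_sum : ∀ y ∈ ball (0 : ℂ) 1, HasSum (fun n => a (n - 1) * b n * y ^ n) (u y) := by
    intro y hy
    have hS := summable_mul_mul_pow ha' hb hy
    convert hS.hasSum using 1
    rw [hu y, ← hS.sum_add_tsum_nat_add 2]
    simp [Finset.sum_range_succ, ha0, hb0, hb1]
  simpa [mul_comm, mul_left_comm, mul_assoc] using hasSum_deriv_of_forall_hasSum hu_sum hz

end PowerSeries

theorem integral_exp_int_mul_I (m : ℤ) :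
    ∫ θ in (0 : ℝ)..2 * π, exp (m * θ * I) = if m = 0 then (2 * π : ℂ) else 0 := by
  split_ifs with hm
  · simp [hm]
  · have hmI : (m : ℂ) * I ≠ 0 := by simp [hm, I_ne_zero]
    have hperiod : exp (m * I * (2 * π : ℝ)) = 1 := by
      rw [← exp_int_mul_two_pi_mul_I m]; push_cast; ring_nf
    simp_rw [mul_right_comm _ _ I]
    rw [integral_exp_mul_complex hmI, hperiod]
    simp

theorem integral_exp_neg_nat_mul_I (k : ℕ) :
    ∫ θ in (0 : ℝ)..2 * π, exp (-k * θ * I) = if k = 0 then (2 * π : ℂ) else 0 := by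
  simpa using integral_exp_int_mul_I (-k)

theorem hasSum_integral_mul_of_hasSum_pow {c : ℕ → ℂ} {f : ℂ → ℂ} {ψ φ : ℝ → ℂ} {R : ℝ}
    (hψ : Continuous ψ) (hφ : Continuous φ) (hψR : ∀ θ, ‖ψ θ‖ ≤ R)
    (hc : Summable fun n => ‖c n‖ * R ^ n)
    (hf : ∀ θ, HasSum (fun n => c n * ψ θ ^ n) (f (ψ θ))) :
    HasSum (fun n => c n * ∫ θ in (0 : ℝ)..2 * π, ψ θ ^ n * φ θ)
      (∫ θ in (0 : ℝ)..2 * π, f (ψ θ) * φ θ) := by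
  obtain ⟨M, hM⟩ :=
    (isCompact_uIcc (a := 0) (b := 2 * π)).exists_bound_of_continuousOn hφ.continuousOn
  simp_rw [← intervalIntegral.integral_const_mul, ← mul_assoc]
  refine intervalIntegral.hasSum_integral_of_dominated_convergence
    (fun n _ => ‖c n‖ * R ^ n * M)
    (fun n => ((continuous_const.mul (hψ.pow n)).mul hφ).aestronglyMeasurable) ?_ ?_
    intervalIntegrable_const ?_
  · refine fun n => .of_forall fun θ hθ => ?_
    have hR : 0 ≤ R := (norm_nonneg _).trans (hψR 0)
    rw [norm_mul, norm_mul, norm_pow]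
    exact mul_le_mul (by gcongr; exact hψR θ) (hM θ (Set.uIoc_subset_uIcc hθ))
      (norm_nonneg _) (by positivity)
  · exact .of_forall fun _ _ => hc.mul_right M
  · exact .of_forall fun θ _ => (hf θ).mul_right (φ θ)

theorem re_integral_mul_ofReal_pos {F : ℝ → ℂ} {W : ℝ → ℝ} {a b : ℝ} (hab : a < b)
    (hF : Continuous F) (hW : Continuous W) (hFre : ∀ θ, 0 < (F θ).re)
    (hW0 : ∀ θ, 0 < W θ) :
    0 < (∫ θ in a..b, F θ * W θ).re := by
  rw [← RCLike.re_to_complex,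
    ← intervalIntegral.intervalIntegral_re (f := fun θ => F θ * W θ)
      ((hF.mul (continuous_ofReal.comp hW)).intervalIntegrable _ _)]
  simp only [RCLike.re_to_complex, re_mul_ofReal]
  exact intervalIntegral.intervalIntegral_pos_of_pos
    (((continuous_re.comp hF).mul hW).intervalIntegrable _ _)
    (fun θ => mul_pos (hFre θ) (hW0 θ)) hab

section FourierCoefficients

variable {c : ℕ → ℂ} {f : ℂ → ℂ} {s : ℝ}

theorem circleMap_mem_ball_zero_one (hs0 : 0 ≤ s) (hs1 : s < 1) (θ : ℝ) :
    circleMap 0 s θ ∈ ball (0 : ℂ) 1 := by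
  simpa [abs_of_nonneg hs0] using hs1

theorem continuous_comp_circleMap_of_forall_hasSum
    (hf : ∀ z ∈ ball (0 : ℂ) 1, HasSum (fun n => c n * z ^ n) (f z))
    (hs0 : 0 ≤ s) (hs1 : s < 1) :
    Continuous fun θ => f (circleMap 0 s θ) :=
  (continuousOn_of_forall_hasSum hf).comp_continuous (continuous_circleMap 0 s)
    (circleMap_mem_ball_zero_one hs0 hs1)

theorem hasSum_integral_circleMap_mul_exp
    (hf : ∀ z ∈ ball (0 : ℂ) 1, HasSum (fun n => c n * z ^ n) (f z))
    (hs0 : 0 ≤ s) (hs1 : s < 1) (m : ℤ) :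
    HasSum (fun n => c n * (s ^ n * if (n + m : ℤ) = 0 then (2 * π : ℂ) else 0))
      (∫ θ in (0 : ℝ)..2 * π, f (circleMap 0 s θ) * exp (m * θ * I)) := by
  convert hasSum_integral_mul_of_hasSum_pow (continuous_circleMap 0 s)
    (by fun_prop : Continuous fun θ : ℝ => exp (m * θ * I))
    (fun θ => (norm_circleMap_zero s θ).trans_le (abs_of_nonneg hs0).le)
    (summable_norm_mul_pow_of_forall_summable (fun z hz => (hf z hz).summable) hs0 hs1)
    (fun θ => hf _ (circleMap_mem_ball_zero_one hs0 hs1 θ)) using 3 with n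
  rw [← integral_exp_int_mul_I, ← intervalIntegral.integral_const_mul]
  congr 1 with θ
  rw [circleMap_zero, mul_pow, ← exp_nat_mul, mul_assoc ((s : ℂ) ^ n), ← exp_add]
  push_cast
  ring_nf

theorem integral_circleMap_mul_exp_neg
    (hf : ∀ z ∈ ball (0 : ℂ) 1, HasSum (fun n => c n * z ^ n) (f z))
    (hs0 : 0 ≤ s) (hs1 : s < 1) (k : ℕ) :
    ∫ θ in (0 : ℝ)..2 * π, f (circleMap 0 s θ) * exp (-k * θ * I) = 2 * π * c k * s ^ k := by
  have h := hasSum_integral_circleMap_mul_exp hf hs0 hs1 (-k)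
  push_cast at h
  refine h.unique ?_
  convert hasSum_ite_eq k (2 * π * c k * s ^ k : ℂ) using 2 with n
  split_ifs with h1 h2 h2
  · subst h2; ring
  · omega
  · omega
  · simp

theorem integral_circleMap_mul_exp
    (hf : ∀ z ∈ ball (0 : ℂ) 1, HasSum (fun n => c n * z ^ n) (f z))
    (hs0 : 0 ≤ s) (hs1 : s < 1) (k : ℕ) :
    ∫ θ in (0 : ℝ)..2 * π, f (circleMap 0 s θ) * exp (k * θ * I) =
      if k = 0 then 2 * π * c 0 else 0 := by
  refine (hasSum_integral_circleMap_mul_exp hf hs0 hs1 k).unique ?_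
  convert hasSum_ite_eq 0 (if k = 0 then 2 * π * c 0 else 0 : ℂ) using 2 with n
  split_ifs <;> first | omega | simp_all [mul_comm]

theorem integral_two_mul_re_sub_one_mul_exp
    (hf : ∀ z ∈ ball (0 : ℂ) 1, HasSum (fun n => c n * z ^ n) (f z)) (hc0 : c 0 = 1)
    (hs0 : 0 ≤ s) (hs1 : s < 1) (k : ℕ) :
    ∫ θ in (0 : ℝ)..2 * π, ((2 * (f (circleMap 0 s θ)).re - 1 : ℝ) : ℂ) * exp (-k * θ * I) =
      2 * π * c k * s ^ k := by
  have hF := continuous_comp_circleMap_of_forall_hasSum hf hs0 hs1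
  -- `2 Re w - 1 = w + conj w - 1`: the conjugate part only has non-positive frequencies, and its
  -- constant term `conj (c 0) = 1` cancels the `-1`
  have hsplit : ∀ w : ℂ, ∀ θ : ℝ, ((2 * w.re - 1 : ℝ) : ℂ) * exp (-k * θ * I) =
      w * exp (-k * θ * I) + conj (w * exp (k * θ * I)) - exp (-k * θ * I) := by
    intro w θ
    rw [map_mul, ← exp_conj]
    simp only [map_mul, conj_ofReal, conj_I, map_natCast]
    push_cast
    rw [re_eq_add_conj]
    ring_nf
  have he (m : ℂ) : Continuous fun θ : ℝ => exp (m * θ * I) := by fun_prop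
  have h1 : IntervalIntegrable (fun θ => f (circleMap 0 s θ) * exp (-k * θ * I))
      MeasureTheory.volume 0 (2 * π) :=
    (hF.mul (he _)).intervalIntegrable _ _
  have h2 : IntervalIntegrable (fun θ => conj (f (circleMap 0 s θ) * exp (k * θ * I)))
      MeasureTheory.volume 0 (2 * π) :=
    (continuous_conj.comp (hF.mul (he _))).intervalIntegrable _ _
  simp_rw [hsplit]
  rw [intervalIntegral.integral_sub (h1.add h2) ((he (-k)).intervalIntegrable _ _),
    intervalIntegral.integral_add h1 h2,
    intervalIntegral.intervalIntegral_conj, integral_circleMap_mul_exp_neg hf hs0 hs1,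
    integral_circleMap_mul_exp hf hs0 hs1, integral_exp_neg_nat_mul_I]
  rcases k with _ | k <;> simp [hc0, conj_ofReal, map_ofNat]

end FourierCoefficients

section Hadamard

theorem norm_div_circleMap {z : ℂ} {s : ℝ} (hs : 0 < s) (θ : ℝ) :
    ‖z / circleMap 0 s θ‖ = ‖z‖ / s := by
  simp [abs_of_pos hs]

theorem div_circleMap_mem_ball {z : ℂ} {s : ℝ} (hzs : ‖z‖ < s) (θ : ℝ) :
    z / circleMap 0 s θ ∈ ball (0 : ℂ) 1 := by
  have hs : 0 < s := (norm_nonneg z).trans_lt hzs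
  rw [mem_ball_zero_iff, norm_div_circleMap hs, div_lt_one hs]
  exact hzs

theorem continuous_div_circleMap {z : ℂ} {s : ℝ} (hs : s ≠ 0) :
    Continuous fun θ => z / circleMap 0 s θ :=
  continuous_const.div (continuous_circleMap 0 s) fun _ => circleMap_ne_center hs

variable {a q : ℕ → ℂ} {p D : ℂ → ℂ}

theorem hasSum_integral_mul_two_mul_re_sub_one
    (hp : ∀ z ∈ ball (0 : ℂ) 1, HasSum (fun n => a n * z ^ n) (p z))
    (hD : ∀ z ∈ ball (0 : ℂ) 1, HasSum (fun n => q n * z ^ n) (D z)) (hq0 : q 0 = 1)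
    {z : ℂ} {s : ℝ} (hzs : ‖z‖ < s) (hs1 : s < 1) :
    HasSum (fun n => 2 * π * (a n * q n * z ^ n))
      (∫ θ in (0 : ℝ)..2 * π,
        p (z / circleMap 0 s θ) * ((2 * (D (circleMap 0 s θ)).re - 1 : ℝ) : ℂ)) := by
  have hs0 : 0 < s := (norm_nonneg z).trans_lt hzs
  have hzs' : ‖z‖ / s < 1 := (div_lt_one hs0).mpr hzs
  have hW : Continuous fun θ => (((2 * (D (circleMap 0 s θ)).re - 1 : ℝ)) : ℂ) :=
    continuous_ofReal.comp <| (continuous_const.mul <| continuous_re.comp <|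
      continuous_comp_circleMap_of_forall_hasSum hD hs0.le hs1).sub continuous_const
  convert hasSum_integral_mul_of_hasSum_pow (continuous_div_circleMap hs0.ne') hW
    (fun θ => (norm_div_circleMap hs0 θ).le)
    (summable_norm_mul_pow_of_forall_summable (fun w hw => (hp w hw).summable) (by positivity)
      hzs')
    (fun θ => hp _ (div_circleMap_mem_ball hzs θ)) using 2 with n
  have hpow (θ : ℝ) : (z / circleMap 0 s θ) ^ n = (z / s) ^ n * exp (-n * θ * I) := by
    rw [circleMap_zero, div_mul_eq_div_div, div_eq_mul_inv _ (exp _), ← exp_neg, mul_pow,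
      ← exp_nat_mul]
    ring_nf
  simp_rw [hpow, mul_right_comm ((z / s) ^ n) (exp _), mul_assoc ((z / s) ^ n),
    intervalIntegral.integral_const_mul, integral_two_mul_re_sub_one_mul_exp hD hq0 hs0.le hs1,
    div_pow]
  have hsC : (s : ℂ) ≠ 0 := ofReal_ne_zero.mpr hs0.ne'
  field_simp

theorem re_tsum_hadamard_pos
    (hp : ∀ z ∈ ball (0 : ℂ) 1, HasSum (fun n => a n * z ^ n) (p z))
    (hD : ∀ z ∈ ball (0 : ℂ) 1, HasSum (fun n => q n * z ^ n) (D z)) (hq0 : q 0 = 1)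
    (hpre : ∀ z ∈ ball (0 : ℂ) 1, 0 < (p z).re) (hDre : ∀ z ∈ ball (0 : ℂ) 1, 1 / 2 < (D z).re)
    {z : ℂ} (hz : z ∈ ball (0 : ℂ) 1) :
    0 < (∑' n, a n * q n * z ^ n).re := by
  obtain ⟨s, hzs, hs1⟩ := exists_between (mem_ball_zero_iff.mp hz)
  have hs0 : 0 < s := (norm_nonneg z).trans_lt hzs
  have hrep := hasSum_integral_mul_two_mul_re_sub_one hp hD hq0 hzs hs1
  have hpos := re_integral_mul_ofReal_pos (F := fun θ => p (z / circleMap 0 s θ))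
    (W := fun θ => 2 * (D (circleMap 0 s θ)).re - 1) Real.two_pi_pos
    ((continuousOn_of_forall_hasSum hp).comp_continuous (continuous_div_circleMap hs0.ne')
      (div_circleMap_mem_ball hzs))
    ((continuous_const.mul <| continuous_re.comp <|
      continuous_comp_circleMap_of_forall_hasSum hD hs0.le hs1).sub continuous_const)
    (fun θ => hpre _ (div_circleMap_mem_ball hzs θ))
    (fun θ => by linarith [hDre _ (circleMap_mem_ball_zero_one hs0.le hs1 θ)])
  rw [← hrep.tsum_eq, tsum_mul_left] at hpos
  have h2π : (2 * π : ℂ) = ((2 * π : ℝ) : ℂ) := by push_cast; rfl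
  rw [h2π, re_ofReal_mul] at hpos
  exact pos_of_mul_pos_right hpos Real.two_pi_pos.le

end Hadamard

theorem convolution_in_R_general (p g : ℂ → ℂ) (pc b : ℕ → ℂ)
    (hpc0 : pc 0 = 1) (hb0 : b 0 = 0) (hb1 : b 1 = 1)
    (hp : ∀ z ∈ ball (0 : ℂ) 1, HasSum (fun n : ℕ => pc n * z ^ n) (p z))
    (hgsum : ∀ z ∈ ball (0 : ℂ) 1, HasSum (fun n : ℕ => b n * z ^ n) (g z))
    (hpre : ∀ z ∈ ball (0 : ℂ) 1, 0 < (p z).re)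
    (hgre : ∀ z ∈ ball (0 : ℂ) 1, 1 / 2 < (deriv g z).re)
    (u : ℂ → ℂ)
    (hu : ∀ z : ℂ, u z = z + ∑' n : ℕ, pc (n + 1) * b (n + 2) * z ^ (n + 2)) :
    ∀ z ∈ ball (0 : ℂ) 1, 0 < (deriv u z).re := by
  intro z hz
  have hu' := hasSum_deriv_of_eq_add_tsum (fun w hw => (hp w hw).summable)
    (fun w hw => (hgsum w hw).summable) hpc0 hb0 hb1 hu hz
  rw [← hu'.tsum_eq]
  exact re_tsum_hadamard_pos (q := fun n => (n + 1) * b (n + 1)) hp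
    (fun w hw => hasSum_deriv_of_forall_hasSum hgsum hw) (by simp [hb1]) hpre hgre hz

theorem convolution_in_R (p g : ℂ → ℂ) (pc b : ℕ → ℂ)
    (hpc0 : pc 0 = 1) (hb0 : b 0 = 0) (hb1 : b 1 = 1)
    (hp : ∀ z ∈ ball (0 : ℂ) 1, HasSum (fun n : ℕ => pc n * z ^ n) (p z))
    (hgsum : ∀ z ∈ ball (0 : ℂ) 1, HasSum (fun n : ℕ => b n * z ^ n) (g z))
    (hg : DifferentiableOn ℂ g (ball (0 : ℂ) 1))
    (hpre : ∀ z ∈ ball (0 : ℂ) 1, 0 < (p z).re)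
    (hgre : ∀ z ∈ ball (0 : ℂ) 1, 1 / 2 < (deriv g z).re)
    (u : ℂ → ℂ)
    (hu : ∀ z : ℂ, u z = z + ∑' n : ℕ, pc (n + 1) * b (n + 2) * z ^ (n + 2)) :
    ∀ z ∈ ball (0 : ℂ) 1, 0 < (deriv u z).re :=
  convolution_in_R_general p g pc b hpc0 hb0 hb1 hp hgsum hpre hgre u hu
end
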